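/- For x ≥ 0, the Gaussian Mill's ratio satisfies Φ̄(x)/φ(x) ≤ 2/(√(2+x²) + x). -/

import Mathlib

/-!
The bound `G(y) = 2 φ(y) / (√(2 + y²) + y) = φ(y) (√(2 + y²) - y)` (`stdTailBound`) tends to `0`
at infinity and satisfies `-G' ≥ φ` on `[0, ∞)`; the latter reduces to `y √(2 + y²) ≤ 1 + y²`,
which is AM-GM. Hence `Φ̄(x) = ∫_x^∞ φ ≤ ∫_x^∞ (-G') = G(x)`.
-/

open Real MeasureTheory Set Filter Topology

/-- The standard normal density `φ`. -/
noncomputable def stdPdf (x : ℝ) : ℝ :=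
  (Real.sqrt (2 * Real.pi))⁻¹ * Real.exp (-x ^ 2 / 2)

/-- The standard normal tail probability `Φ̄(x) = ∫_x^∞ φ`. -/
noncomputable def stdTail (x : ℝ) : ℝ := ∫ t in Set.Ioi x, stdPdf t

theorem setIntegral_Ioi_le_of_le_neg_deriv {f g g' : ℝ → ℝ} {a l : ℝ}
    (hf : IntegrableOn f (Ioi a)) (hf₀ : ∀ x ∈ Ioi a, 0 ≤ f x)
    (hderiv : ∀ x ∈ Ici a, HasDerivAt g (g' x) x) (hle : ∀ x ∈ Ioi a, f x ≤ -g' x)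
    (hg : Tendsto g atTop (𝓝 l)) :
    ∫ x in Ioi a, f x ≤ g a - l := by
  have hg' : ∀ x ∈ Ioi a, g' x ≤ 0 := fun x hx => by linarith [hf₀ x hx, hle x hx]
  calc ∫ x in Ioi a, f x
      ≤ ∫ x in Ioi a, -g' x :=
        setIntegral_mono_on hf (integrableOn_Ioi_deriv_of_nonpos' hderiv hg' hg).neg
          measurableSet_Ioi hle
    _ = g a - l := by
        rw [integral_neg, integral_Ioi_of_hasDerivAt_of_nonpos' hderiv hg' hg, neg_sub]

theorem abs_lt_sqrt_two_add_sq (y : ℝ) : |y| < √(2 + y ^ 2) :=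
  (lt_sqrt (abs_nonneg y)).2 (by rw [sq_abs]; linarith)

theorem sqrt_two_add_sq_add_pos (y : ℝ) : 0 < √(2 + y ^ 2) + y := by
  linarith [abs_lt_sqrt_two_add_sq y, neg_abs_le y]

theorem sqrt_two_add_sq_sub_eq_two_div (y : ℝ) :
    √(2 + y ^ 2) - y = 2 / (√(2 + y ^ 2) + y) := by
  have hs : √(2 + y ^ 2) ^ 2 = 2 + y ^ 2 := sq_sqrt (by positivity)
  rw [eq_div_iff (sqrt_two_add_sq_add_pos y).ne']
  linear_combination hs

theorem mul_sqrt_two_add_sq_le (y : ℝ) : y * √(2 + y ^ 2) ≤ 1 + y ^ 2 := by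
  have hs : √(2 + y ^ 2) ^ 2 = 2 + y ^ 2 := sq_sqrt (by positivity)
  nlinarith [sq_nonneg (y - √(2 + y ^ 2))]

theorem hasDerivAt_sqrt_two_add_sq_sub (y : ℝ) :
    HasDerivAt (fun z => √(2 + z ^ 2) - z) (y / √(2 + y ^ 2) - 1) y := by
  have h := (((hasDerivAt_pow 2 y).const_add 2).sqrt (by positivity)).sub (hasDerivAt_id' y)
  exact h.congr_deriv (by field_simp; ring)

theorem tendsto_sqrt_two_add_sq_sub_atTop :
    Tendsto (fun y => √(2 + y ^ 2) - y) atTop (𝓝 0) := by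
  simp_rw [sqrt_two_add_sq_sub_eq_two_div]
  exact tendsto_const_nhds.div_atTop
    (tendsto_atTop_add_left_of_le _ 0 (fun _ => sqrt_nonneg _) tendsto_id)

theorem stdPdf_pos (x : ℝ) : 0 < stdPdf x := by
  unfold stdPdf
  positivity

theorem stdPdf_eq_gaussianPDFReal : stdPdf = ProbabilityTheory.gaussianPDFReal 0 1 := by
  ext x
  simp [stdPdf, ProbabilityTheory.gaussianPDFReal]

theorem integrable_stdPdf : Integrable stdPdf :=
  stdPdf_eq_gaussianPDFReal ▸ ProbabilityTheory.integrable_gaussianPDFReal 0 1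

theorem hasDerivAt_stdPdf (x : ℝ) : HasDerivAt stdPdf (-x * stdPdf x) x := by
  have h : HasDerivAt (fun y : ℝ => -y ^ 2 / 2) (-x) x := by
    simpa [neg_div] using ((hasDerivAt_pow 2 x).neg).div_const 2
  exact (h.exp.const_mul _).congr_deriv (by simp only [stdPdf]; ring)

theorem tendsto_stdPdf_atTop : Tendsto stdPdf atTop (𝓝 0) := by
  have h : Tendsto (fun y : ℝ => -y ^ 2 / 2) atTop atBot :=
    (tendsto_neg_atTop_atBot.comp (tendsto_pow_atTop two_ne_zero)).atBot_div_const two_pos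
  have := (tendsto_exp_atBot.comp h).const_mul (√(2 * π))⁻¹
  rwa [mul_zero] at this

noncomputable def stdTailBound (y : ℝ) : ℝ := stdPdf y * (√(2 + y ^ 2) - y)

theorem hasDerivAt_stdTailBound (y : ℝ) :
    HasDerivAt stdTailBound
      (stdPdf y * (y / √(2 + y ^ 2) - 1 - y * (√(2 + y ^ 2) - y))) y :=
  ((hasDerivAt_stdPdf y).mul (hasDerivAt_sqrt_two_add_sq_sub y)).congr_deriv (by ring)

theorem stdPdf_le_neg_deriv_stdTailBound {y : ℝ} (hy : 0 ≤ y) :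
    stdPdf y ≤ -(stdPdf y * (y / √(2 + y ^ 2) - 1 - y * (√(2 + y ^ 2) - y))) := by
  have hs : 0 < √(2 + y ^ 2) := sqrt_pos.2 (by positivity)
  have hs2 : √(2 + y ^ 2) ^ 2 = 2 + y ^ 2 := sq_sqrt (by positivity)
  have key : y / √(2 + y ^ 2) ≤ y * (√(2 + y ^ 2) - y) := by
    rw [div_le_iff₀ hs]
    nlinarith [mul_nonneg hy (sub_nonneg.2 (mul_sqrt_two_add_sq_le y))]
  nlinarith [mul_le_mul_of_nonneg_left key (stdPdf_pos y).le]

theorem tendsto_stdTailBound_atTop : Tendsto stdTailBound atTop (𝓝 0) :=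
  mul_zero (0 : ℝ) ▸ tendsto_stdPdf_atTop.mul tendsto_sqrt_two_add_sq_sub_atTop

theorem stdTail_le_stdTailBound {x : ℝ} (hx : 0 ≤ x) : stdTail x ≤ stdTailBound x :=
  sub_zero (stdTailBound x) ▸ setIntegral_Ioi_le_of_le_neg_deriv integrable_stdPdf.integrableOn
    (fun y _ => (stdPdf_pos y).le) (fun y _ => hasDerivAt_stdTailBound y)
    (fun _ hy => stdPdf_le_neg_deriv_stdTailBound (hx.trans hy.out.le)) tendsto_stdTailBound_atTop

/-- Mill's ratio bound: for `x ≥ 0`, `Φ̄(x)/φ(x) ≤ 2/(√(2+x²) + x)`. -/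
theorem stmt_10 (x : ℝ) (hx : 0 ≤ x) :
    stdTail x / stdPdf x ≤ 2 / (Real.sqrt (2 + x ^ 2) + x) := by
  rw [div_le_iff₀ (stdPdf_pos x), ← sqrt_two_add_sq_sub_eq_two_div, mul_comm]
  exact stdTail_le_stdTailBound hx
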